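/- arXiv:0811.2090 — 2 statements merged into one kernel-verified Lean document; each statement's English description precedes it below -/
import Mathlib

section
/- Let T be a Hausdorff tree, α a limit ordinal of cofinality κ, H ⊆ T_α, and (α_ξ)_{ξ<κ} a cofinal sequence in α. Suppose π : H → ⋃_{ξ<κ} T_{α_ξ} is a regressive map such that every fibre π^{-1}(w) is simple. Then H is simple. -/
open Set

/-- A partial order is a tree order if the set of strict predecessors of
each element is well-ordered. -/
def IsTreeOrder (T : Type) [PartialOrder T] : Prop :=
  ∀ x : T, IsWellOrder {y : T // y < x} (fun a b => (a : T) < (b : T))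

/-- The height of an element of a tree: the order type of its set of strict
predecessors. -/
noncomputable def treeHt {T : Type} [PartialOrder T] (hT : IsTreeOrder T) (x : T) : Ordinal :=
  @Ordinal.type {y : T // y < x} (fun a b => (a : T) < (b : T)) (hT x)

/-- The level of a tree of order `α`. -/
def treeLevel {T : Type} [PartialOrder T] (hT : IsTreeOrder T) (α : Ordinal) : Set T :=
  {x : T | treeHt hT x = α}

/-- `f` is a cofinal sequence in the limit ordinal `α`: it is a strictly increasing
`cf α`-indexed sequence of ordinals below `α` whose supremum is `α`. -/
def IsCofinalSeq (α : Ordinal) (f : Ordinal → Ordinal) : Prop :=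
  (∀ ξ η : Ordinal, ξ < η → η < α.cof.ord → f ξ < f η) ∧
  (∀ ξ : Ordinal, ξ < α.cof.ord → f ξ < α) ∧
  (∀ β : Ordinal, β < α → ∃ ξ : Ordinal, ξ < α.cof.ord ∧ β ≤ f ξ)

/-- A subset `H` of the level `T_α` (`α` a limit ordinal) is simple if for some
cofinal sequence `(α_ξ)_{ξ < cf α}` in `α` there is an injective regressive map
from `H` into `⋃_{ξ < cf α} T_{α_ξ}`. -/
def TreeSimple {T : Type} [PartialOrder T] (hT : IsTreeOrder T) (α : Ordinal)
    (H : Set T) : Prop :=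
  ∃ f : Ordinal → Ordinal, IsCofinalSeq α f ∧
    ∃ π : T → T, Set.InjOn π H ∧
      ∀ x ∈ H, π x < x ∧ ∃ ξ : Ordinal, ξ < α.cof.ord ∧ treeHt hT (π x) = f ξ

/-- A tree is Hausdorff if every nonempty totally ordered subset has at most one
minimal upper bound. -/
def IsHausdorffTree (T : Type) [PartialOrder T] : Prop :=
  ∀ A : Set T, A.Nonempty → IsChain (· ≤ ·) A → ∀ u v : T,
    u ∈ upperBounds A → (∀ w ∈ upperBounds A, ¬ w < u) →
    v ∈ upperBounds A → (∀ w ∈ upperBounds A, ¬ w < v) → u = v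

/-- The interval topology on a tree, generated by the sets `(x, z]` and `(0, z]`. -/
def intervalTopology (T : Type) [PartialOrder T] : TopologicalSpace T :=
  TopologicalSpace.generateFrom
    ({s : Set T | ∃ x z : T, s = Set.Ioc x z} ∪ {s : Set T | ∃ z : T, s = Set.Iic z})

/-!
Give every `x ∈ H` two indices below `cf α`: the index `a x` of the level of `π x`, and the index
`η x` of the level of its image under the injective regressive map of its fibre, after that map
has been moved to the same cofinal sequence `f`. Map `x` to its predecessor at level `f ⟨a x, η x⟩`,
where `⟨·, ·⟩` is a pairing function on `cf α` dominating both arguments. Two points with the same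
image have the same indices; in a tree, predecessors of a common node are determined by their
heights, so the two points have the same `π`-value and the same image under the fibre map, hence
coincide.
-/

open Ordinal Cardinal

section MaxLex

variable {α : Type*} [LinearOrder α]

def maxLexEmbedding : α × α ↪ α ×ₗ (α ×ₗ α) :=
  ⟨fun p ↦ toLex (max p.1 p.2, toLex p), fun _ _ ↦ congrArg Prod.snd⟩

def MaxLexLT : α × α → α × α → Prop :=
  maxLexEmbedding ⁻¹'o (· < ·)

theorem maxLexLT_of_max_lt {p q : α × α} (h : max p.1 p.2 < max q.1 q.2) : MaxLexLT p q :=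
  Prod.Lex.left _ _ h

theorem max_le_of_maxLexLT {p q : α × α} (h : MaxLexLT p q) : max p.1 p.2 ≤ max q.1 q.2 := by
  rcases Prod.Lex.lt_iff.1 h with h | h
  exacts [h.le, h.1.le]

variable [WellFoundedLT α]

instance : IsWellOrder (α × α) MaxLexLT :=
  (RelEmbedding.preimage maxLexEmbedding (· < ·)).isWellOrder

theorem typein_max_le_typein_maxLexLT (p : α × α) :
    typein (α := α) (· < ·) (max p.1 p.2) ≤ typein MaxLexLT p := by
  induction p using (IsWellFounded.wf : WellFounded (MaxLexLT (α := α))).induction with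
  | _ p IH =>
  refine le_of_forall_lt fun δ hδ ↦ ?_
  obtain ⟨u, rfl⟩ := typein_surj (α := α) (· < ·) (hδ.trans (typein_lt_type _ _))
  have hu : MaxLexLT (u, u) p := maxLexLT_of_max_lt (by simpa using hδ)
  calc typein (α := α) (· < ·) u = typein (α := α) (· < ·) (max u u) := by rw [max_self]
    _ ≤ typein MaxLexLT (u, u) := IH _ hu
    _ < typein MaxLexLT p := (typein_lt_typein _).2 hu

theorem card_typein_maxLexLT_le (p : α × α) :
    (typein MaxLexLT p).card ≤ #(Iic (max p.1 p.2)) * #(Iic (max p.1 p.2)) := by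
  rw [card_typein, ← mk_setProd]
  refine mk_le_mk_of_subset (s := {q | MaxLexLT q p}) fun q hq ↦ ?_
  have := max_le_of_maxLexLT hq
  exact ⟨(le_max_left _ _).trans this, (le_max_right _ _).trans this⟩

end MaxLex

-- Gödel's pairing: an initial segment of `MaxLexLT` lies in a square `Iic m ×ˢ Iic m`, which
-- has fewer than `κ` elements.
theorem Cardinal.exists_pairing_lt_ord {κ : Cardinal} (hκ : ℵ₀ ≤ κ) :
    ∃ p : Ordinal → Ordinal → Ordinal,
      (∀ a < κ.ord, ∀ b < κ.ord, max a b ≤ p a b ∧ p a b < κ.ord) ∧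
        InjOn (Function.uncurry p) (Iio κ.ord ×ˢ Iio κ.ord) := by
  have typein_mk (a : Iio κ.ord) : typein (α := κ.ord.ToType) (· < ·) (ToType.mk a) = a := by
    rw [← ToType.mk_symm_apply_coe, RelIso.symm_apply_apply]
  have mk_Iic_lt (u : κ.ord.ToType) : #(Iic u) < κ := by
    simpa using mk_Iic_lt u (by simp) (by simpa using hκ)
  let pair (a b : Iio κ.ord) : Ordinal := typein MaxLexLT (ToType.mk a, ToType.mk b)
  refine ⟨fun a b ↦ if h : a < κ.ord ∧ b < κ.ord then pair ⟨a, h.1⟩ ⟨b, h.2⟩ else 0,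
    fun a ha b hb ↦ ?_, ?_⟩
  · simp only [dif_pos (And.intro ha hb)]
    have le_typein_max (c : Iio κ.ord) (hc : c = a ∨ c = b) :
        (c : Ordinal) ≤ typein (α := κ.ord.ToType) (· < ·)
          (max (ToType.mk ⟨a, ha⟩) (ToType.mk ⟨b, hb⟩)) := by
      rw [← typein_mk c, typein_le_typein, not_lt]
      rcases hc with rfl | rfl
      exacts [le_max_left _ _, le_max_right _ _]
    refine ⟨(max_le (le_typein_max ⟨a, ha⟩ (.inl rfl)) (le_typein_max ⟨b, hb⟩ (.inr rfl))).trans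
      (typein_max_le_typein_maxLexLT _), lt_ord.2 ?_⟩
    exact (card_typein_maxLexLT_le _).trans_lt (mul_lt_of_lt hκ (mk_Iic_lt _) (mk_Iic_lt _))
  · rintro ⟨a, b⟩ ⟨ha : a < κ.ord, hb : b < κ.ord⟩ ⟨a', b'⟩ ⟨ha' : a' < κ.ord, hb' : b' < κ.ord⟩ h
    simp only [Function.uncurry_apply_pair, dif_pos (And.intro ha hb),
      dif_pos (And.intro ha' hb')] at h
    obtain ⟨h₁, h₂⟩ := Prod.ext_iff.1 (typein_injective _ h)
    rw [Prod.mk.injEq, ← Subtype.mk.injEq a ha a' ha', ← Subtype.mk.injEq b hb b' hb']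
    exact ⟨ToType.mk.injective h₁, ToType.mk.injective h₂⟩

theorem IsCofinalSeq.strictMonoOn {α : Ordinal} {f : Ordinal → Ordinal} (hf : IsCofinalSeq α f) :
    StrictMonoOn f (Iio α.cof.ord) :=
  fun ξ _ η hη h ↦ hf.1 ξ η h hη

def TreeSimpleWith {T : Type} [PartialOrder T] (hT : IsTreeOrder T) (α : Ordinal)
    (f : Ordinal → Ordinal) (H : Set T) : Prop :=
  ∃ π : T → T, InjOn π H ∧ ∀ x ∈ H, π x < x ∧ ∃ ξ < α.cof.ord, treeHt hT (π x) = f ξ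

namespace IsTreeOrder

variable {T : Type} [PartialOrder T] (hT : IsTreeOrder T) {α : Ordinal} {H : Set T}
  {f : Ordinal → Ordinal}

theorem treeHt_eq_typein {x y : T} (h : y < x) :
    treeHt hT y = @typein {z : T // z < x} (fun a b ↦ (a : T) < b) (hT x) ⟨y, h⟩ := by
  have := hT x
  have := hT y
  rw [← type_subrel]
  exact type_eq.2 ⟨⟨⟨fun a ↦ ⟨⟨a, a.2.trans h⟩, a.2⟩, fun b ↦ ⟨b.1, b.2⟩, fun _ ↦ rfl, fun _ ↦ rfl⟩,
    Iff.rfl⟩⟩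

theorem treeHt_lt_treeHt {x y : T} (h : y < x) : treeHt hT y < treeHt hT x := by
  have := hT x
  rw [hT.treeHt_eq_typein h]
  exact typein_lt_type _ _

theorem exists_lt_treeHt_eq {x : T} {β : Ordinal} (h : β < treeHt hT x) :
    ∃ y < x, treeHt hT y = β := by
  have := hT x
  obtain ⟨y, rfl⟩ := typein_surj (fun a b : {y : T // y < x} ↦ (a : T) < b) h
  exact ⟨y, y.2, hT.treeHt_eq_typein y.2⟩

theorem le_of_lt_of_lt_of_treeHt_le {x u v : T} (hu : u < x) (hv : v < x)
    (h : treeHt hT u ≤ treeHt hT v) : u ≤ v := by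
  have := hT x
  rcases trichotomous_of (fun a b : {y : T // y < x} ↦ (a : T) < b) ⟨u, hu⟩ ⟨v, hv⟩
    with hlt | heq | hgt
  · exact hlt.le
  · exact (congrArg Subtype.val heq).le
  · exact absurd (hT.treeHt_lt_treeHt hgt) h.not_gt

theorem eq_of_le_of_le_of_treeHt_eq {y u v : T} (hu : u ≤ y) (hv : v ≤ y)
    (h : treeHt hT u = treeHt hT v) : u = v := by
  rcases hu.lt_or_eq with hu | rfl <;> rcases hv.lt_or_eq with hv | rfl
  · exact (hT.le_of_lt_of_lt_of_treeHt_le hu hv h.le).antisymm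
      (hT.le_of_lt_of_lt_of_treeHt_le hv hu h.ge)
  · exact absurd h (hT.treeHt_lt_treeHt hu).ne
  · exact absurd h.symm (hT.treeHt_lt_treeHt hv).ne
  · rfl

theorem eq_of_treeHt_eq_of_lt_of_lt {x x' y u v : T} (hu : u < x) (hv : v < x')
    (hy : y < x) (hy' : y < x') (huv : treeHt hT u = treeHt hT v)
    (huy : treeHt hT u ≤ treeHt hT y) : u = v :=
  hT.eq_of_le_of_le_of_treeHt_eq (hT.le_of_lt_of_lt_of_treeHt_le hu hy huy)
    (hT.le_of_lt_of_lt_of_treeHt_le hv hy' (huv ▸ huy)) huv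

theorem treeSimpleWith_of_separating (hα : Order.IsSuccLimit α) (hH : H ⊆ treeLevel hT α)
    (hf : IsCofinalSeq α f) (u v : T → Ordinal) (hu : ∀ x ∈ H, u x < α.cof.ord)
    (hv : ∀ x ∈ H, v x < α.cof.ord)
    (hsep : ∀ x ∈ H, ∀ x' ∈ H, u x = u x' → v x = v x' → ∀ y < x, y < x' →
      f (u x) ≤ treeHt hT y → f (v x) ≤ treeHt hT y → x = x') :
    TreeSimpleWith hT α f H := by
  obtain ⟨p, hp, hpinj⟩ :=
    exists_pairing_lt_ord (aleph0_le_cof_iff.2 (one_lt_cof_iff.2 hα))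
  have hζ (x) (hx : x ∈ H) := hp _ (hu x hx) _ (hv x hx)
  have hρ (x) (hx : x ∈ H) : ∃ y < x, treeHt hT y = f (p (u x) (v x)) :=
    hT.exists_lt_treeHt_eq ((hf.2.1 _ (hζ x hx).2).trans_eq (hH hx).symm)
  choose! ρ hρlt hρht using hρ
  refine ⟨ρ, fun x hx x' hx' hρx ↦ ?_, fun x hx ↦ ⟨hρlt x hx, _, (hζ x hx).2, hρht x hx⟩⟩
  have hpx : p (u x) (v x) = p (u x') (v x') :=
    hf.strictMonoOn.injOn (hζ x hx).2 (hζ x' hx').2 (by rw [← hρht x hx, ← hρht x' hx', hρx])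
  obtain ⟨hux, hvx⟩ := Prod.ext_iff.1 <|
    hpinj (x₁ := (u x, v x)) ⟨hu x hx, hv x hx⟩ (x₂ := (u x', v x')) ⟨hu x' hx', hv x' hx'⟩ hpx
  have hf_le_ht {ξ} (hξ : ξ ≤ max (u x) (v x)) : f ξ ≤ treeHt hT (ρ x) := by
    rw [hρht x hx]
    exact hf.strictMonoOn.monotoneOn (hξ.trans_lt ((hζ x hx).1.trans_lt (hζ x hx).2)) (hζ x hx).2
      (hξ.trans (hζ x hx).1)
  exact hsep x hx x' hx' hux hvx (ρ x) (hρlt x hx) (hρx ▸ hρlt x' hx') (hf_le_ht (le_max_left _ _))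
    (hf_le_ht (le_max_right _ _))

theorem treeSimpleWith_of_treeSimple (hα : Order.IsSuccLimit α) (hH : H ⊆ treeLevel hT α)
    (hs : TreeSimple hT α H) (hf : IsCofinalSeq α f) : TreeSimpleWith hT α f H := by
  obtain ⟨_, -, P, hPinj, hP⟩ := hs
  choose! η hη hPht using fun x hx ↦ (hP x hx).2
  choose! c hc hPc using fun x (hx : x ∈ H) ↦
    hf.2.2 (treeHt hT (P x)) ((hT.treeHt_lt_treeHt (hP x hx).1).trans_eq (hH hx))
  refine hT.treeSimpleWith_of_separating hα hH hf η c hη hc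
    fun x hx x' hx' hηx _ y hy hy' _ hcy ↦ hPinj hx hx' ?_
  exact hT.eq_of_treeHt_eq_of_lt_of_lt (hP x hx).1 (hP x' hx').1 hy hy'
    (by rw [hPht x hx, hPht x' hx', hηx]) ((hPc x hx).trans hcy)

end IsTreeOrder

theorem stmt_8_general {T : Type} [PartialOrder T] (hT : IsTreeOrder T)
    (α : Ordinal) (hα : Order.IsSuccLimit α) (H : Set T) (hH : H ⊆ treeLevel hT α)
    (f : Ordinal → Ordinal) (hf : IsCofinalSeq α f)
    (π : T → T) (hπreg : ∀ x ∈ H, π x < x)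
    (hπmem : ∀ x ∈ H, ∃ ξ : Ordinal, ξ < α.cof.ord ∧ treeHt hT (π x) = f ξ)
    (hfib : ∀ w : T, TreeSimple hT α {x ∈ H | π x = w}) :
    TreeSimple hT α H := by
  have hfib' (w : T) : TreeSimpleWith hT α f {x ∈ H | π x = w} :=
    hT.treeSimpleWith_of_treeSimple hα ((sep_subset _ _).trans hH) (hfib w) hf
  choose P hPinj hP using hfib'
  choose! a ha hπht using hπmem
  choose! η hη hPht using fun x (hx : x ∈ H) ↦ (hP (π x) x ⟨hx, rfl⟩).2
  refine ⟨f, hf, hT.treeSimpleWith_of_separating hα hH hf a η ha hη ?_⟩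
  intro x hx x' hx' hax hηx y hy hy' hay hηy
  have hπx : π x = π x' := hT.eq_of_treeHt_eq_of_lt_of_lt (hπreg x hx) (hπreg x' hx') hy hy'
    (by rw [hπht x hx, hπht x' hx', hax]) ((hπht x hx).trans_le hay)
  have hx'w : x' ∈ {z ∈ H | π z = π x} := ⟨hx', hπx.symm⟩
  refine hPinj (π x) ⟨hx, rfl⟩ hx'w (hT.eq_of_treeHt_eq_of_lt_of_lt (hP _ x ⟨hx, rfl⟩).1
    (hP _ x' hx'w).1 hy hy' ?_ ((hPht x hx).trans_le hηy))
  rw [hPht x hx, hηx, ← hPht x' hx', hπx]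

/-- If `π : H → ⋃_{ξ<κ} T_{α_ξ}` is a regressive map on `H ⊆ T_α` all of whose fibres
are simple, then `H` is simple. -/
theorem stmt_8 {T : Type} [PartialOrder T] (hT : IsTreeOrder T) (hHaus : IsHausdorffTree T)
    (α : Ordinal) (hα : Order.IsSuccLimit α) (H : Set T) (hH : H ⊆ treeLevel hT α)
    (f : Ordinal → Ordinal) (hf : IsCofinalSeq α f)
    (π : T → T) (hπreg : ∀ x ∈ H, π x < x)
    (hπmem : ∀ x ∈ H, ∃ ξ : Ordinal, ξ < α.cof.ord ∧ treeHt hT (π x) = f ξ)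
    (hfib : ∀ w : T, TreeSimple hT α {x ∈ H | π x = w}) :
    TreeSimple hT α H :=
  stmt_8_general hT α hα H hH f hf π hπreg hπmem hfib
end

section
/- Let T be an admissible partition tree of a compact linearly ordered space K. If a, b ∈ T_α are distinct elements of the same level T_α, then a ∩ b contains at most one point. -/
open Set

/-- `T`, together with the interpretation map `I` assigning to each element of `T` a
subset of `K`, is an admissible partition tree of the compact linearly ordered space `K`. -/
structure IsAdmissiblePartitionTree (K : Type) [LinearOrder K] [TopologicalSpace K]
    (T : Type) [PartialOrder T] (I : T → Set K) : Prop where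
  /-- The order on `T` is a tree order. -/
  tree : IsTreeOrder T
  /-- The tree order is reverse inclusion of the associated intervals. -/
  le_iff : ∀ a b : T, a ≤ b ↔ I b ⊆ I a
  /-- Every member is a closed subset of `K`. -/
  closed : ∀ a : T, IsClosed (I a)
  /-- Every member is an interval of `K`. -/
  interval : ∀ a : T, (I a).OrdConnected
  /-- Every member is non-trivial, i.e. has at least two points. -/
  nontrivial : ∀ a : T, ∃ x y : K, x ∈ I a ∧ y ∈ I a ∧ x ≠ y
  /-- The zeroth level consists precisely of (the element representing) `K` itself. -/
  root : ∀ a : T, treeHt tree a = 0 ↔ I a = Set.univ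
  /-- The zeroth level is nonempty. -/
  root_exists : ∃ a : T, I a = Set.univ
  /-- Two-element members have no immediate successors. -/
  two_elt : ∀ a : T, (∃ x y : K, x ≠ y ∧ I a = {x, y}) → ¬ ∃ b : T, a ⋖ b
  /-- A member with at least three elements has exactly two immediate successors,
  splitting it at an interior point. -/
  three_elt : ∀ a : T,
    (∃ x y z : K, x ≠ y ∧ y ≠ z ∧ x ≠ z ∧ x ∈ I a ∧ y ∈ I a ∧ z ∈ I a) →
    ∃ b c : T, a ⋖ b ∧ a ⋖ c ∧ b ≠ c ∧ (∀ d : T, a ⋖ d → d = b ∨ d = c) ∧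
      ∃ x y z : K, x < y ∧ y < z ∧
        IsLeast (I a) x ∧ IsLeast (I b) x ∧ IsGreatest (I b) y ∧
        IsLeast (I c) y ∧ IsGreatest (I c) z ∧ IsGreatest (I a) z
  /-- For limit `α`, the members of level `α` are exactly the intersections of members
  chosen from each earlier level. -/
  limit_level : ∀ α : Ordinal, Order.IsSuccLimit α → ∀ a : T,
    (treeHt tree a = α ↔ ∃ g : Ordinal → T, (∀ ξ : Ordinal, ξ < α → treeHt tree (g ξ) = ξ) ∧
      I a = ⋂ ξ ∈ Set.Iio α, I (g ξ))

/-!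
Induct on the common height `α` of `a ≠ b`. If distinct predecessors `c < a`, `d < b` of a common
height exist, then `I a ∩ I b ⊆ I c ∩ I d`, which is a subsingleton by induction. Otherwise `a` and
`b` have the same predecessors at every height. At height `0` and at limit heights an element is
determined by its predecessors (its interval is `K`, resp. the intersection of theirs), so `a = b`;
at a successor height `a` and `b` are the two immediate successors of a common `c`, whose intervals
share only the splitting point.
-/

section TreeOrder

variable {T : Type} [PartialOrder T] (hT : IsTreeOrder T)

lemma treeHt_eq_typein {x y : T} (h : y < x) :
    treeHt hT y =
      @Ordinal.typein {z : T // z < x} (fun a b => (a : T) < (b : T)) (hT x) ⟨y, h⟩ := by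
  have := hT x; have := hT y
  rw [← Ordinal.type_subrel]
  exact Ordinal.type_eq.2 ⟨⟨⟨fun z => ⟨⟨z.1, z.2.trans h⟩, z.2⟩, fun w => ⟨w.1.1, w.2⟩,
    fun _ => rfl, fun _ => rfl⟩, Iff.rfl⟩⟩

lemma treeHt_strictMono : StrictMono (treeHt hT) := fun y x h => by
  have := hT x
  rw [treeHt_eq_typein hT h]
  exact Ordinal.typein_lt_type _ _

lemma exists_lt_treeHt_eq {x : T} {ξ : Ordinal} (h : ξ < treeHt hT x) :
    ∃ y, y < x ∧ treeHt hT y = ξ := by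
  have := hT x
  obtain ⟨y, hy⟩ := Ordinal.typein_surj (fun (a b : {w : T // w < x}) => (a : T) < (b : T)) h
  exact ⟨y.1, y.2, (treeHt_eq_typein hT y.2).trans hy⟩

lemma covBy_of_treeHt_eq_succ {x y : T} (h : y < x)
    (hxy : treeHt hT x = Order.succ (treeHt hT y)) : y ⋖ x :=
  ⟨h, fun _ hyd hdx => (Order.lt_succ_iff.1 (hxy ▸ treeHt_strictMono hT hdx)).not_gt
    (treeHt_strictMono hT hyd)⟩

end TreeOrder

namespace IsAdmissiblePartitionTree

variable {K : Type} [LinearOrder K] [TopologicalSpace K] {T : Type} [PartialOrder T] {I : T → Set K}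

theorem injective (hT : IsAdmissiblePartitionTree K T I) : Function.Injective I :=
  fun a b h => le_antisymm ((hT.le_iff a b).2 h.ge) ((hT.le_iff b a).2 h.le)

theorem lt_of_subset_of_treeHt_lt (hT : IsAdmissiblePartitionTree K T I) {a c : T}
    (hsub : I a ⊆ I c) (hlt : treeHt hT.tree c < treeHt hT.tree a) : c < a :=
  ((hT.le_iff c a).2 hsub).lt_of_ne fun h => hlt.ne (congrArg _ h)

theorem exists_three_mem_of_covBy (hT : IsAdmissiblePartitionTree K T I) {a c : T} (h : c ⋖ a) :
    ∃ x y z : K, x ≠ y ∧ y ≠ z ∧ x ≠ z ∧ x ∈ I c ∧ y ∈ I c ∧ z ∈ I c := by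
  obtain ⟨x, y, hx, hy, hxy⟩ := hT.nontrivial c
  by_contra! hthree
  have hpair : I c = {x, y} := by
    refine Subset.antisymm (fun z hz => ?_) (insert_subset hx (singleton_subset_iff.2 hy))
    by_contra! hz'
    simp only [mem_insert_iff, mem_singleton_iff, not_or] at hz'
    exact hthree x y z hxy (Ne.symm hz'.2) (Ne.symm hz'.1) hx hy hz
  exact hT.two_elt c ⟨x, y, hxy, hpair⟩ ⟨a, h⟩

theorem inter_subsingleton_of_covBy (hT : IsAdmissiblePartitionTree K T I) {a b c : T}
    (ha : c ⋖ a) (hb : c ⋖ b) (hab : a ≠ b) : (I a ∩ I b).Subsingleton := by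
  obtain ⟨b', c', -, -, -, hsucc, -, y, -, -, -, -, -, hmax, hmin, -, -⟩ :=
    hT.three_elt c (hT.exists_three_mem_of_covBy ha)
  have hsplit : (I b' ∩ I c').Subsingleton :=
    subsingleton_singleton.anti fun p hp => le_antisymm (hmax.2 hp.1) (hmin.2 hp.2)
  rcases hsucc a ha with rfl | rfl <;> rcases hsucc b hb with rfl | rfl
  · exact absurd rfl hab
  · exact hsplit
  · exact inter_comm (I a) (I b) ▸ hsplit
  · exact absurd rfl hab

def SamePreds (hT : IsAdmissiblePartitionTree K T I) (a b : T) : Prop :=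
  ∀ c d : T, c < a → d < b → treeHt hT.tree c = treeHt hT.tree d → c = d

theorem eq_of_samePreds_of_isSuccLimit (hT : IsAdmissiblePartitionTree K T I) {a b : T}
    {α : Ordinal} (hlim : Order.IsSuccLimit α) (ha : treeHt hT.tree a = α)
    (hb : treeHt hT.tree b = α) (hpred : hT.SamePreds a b) : a = b := by
  obtain ⟨g, hg, hIa⟩ := (hT.limit_level α hlim a).1 ha
  obtain ⟨g', hg', hIb⟩ := (hT.limit_level α hlim b).1 hb
  have hgg : ∀ ξ < α, g ξ = g' ξ := fun ξ hξ =>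
    hpred _ _
      (hT.lt_of_subset_of_treeHt_lt (hIa ▸ biInter_subset_of_mem hξ) (by rwa [hg ξ hξ, ha]))
      (hT.lt_of_subset_of_treeHt_lt (hIb ▸ biInter_subset_of_mem hξ) (by rwa [hg' ξ hξ, hb]))
      ((hg ξ hξ).trans (hg' ξ hξ).symm)
  exact hT.injective (by rw [hIa, hIb]; exact iInter₂_congr fun ξ hξ => by rw [hgg ξ hξ])

theorem exists_covBy_of_samePreds_of_succ (hT : IsAdmissiblePartitionTree K T I) {a b : T}
    {η : Ordinal} (ha : treeHt hT.tree a = Order.succ η) (hb : treeHt hT.tree b = Order.succ η)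
    (hpred : hT.SamePreds a b) : ∃ c, c ⋖ a ∧ c ⋖ b := by
  obtain ⟨c, hca, hc⟩ := exists_lt_treeHt_eq hT.tree (ha ▸ Order.lt_succ η)
  obtain ⟨d, hdb, hd⟩ := exists_lt_treeHt_eq hT.tree (hb ▸ Order.lt_succ η)
  obtain rfl := hpred c d hca hdb (hc.trans hd.symm)
  exact ⟨c, covBy_of_treeHt_eq_succ hT.tree hca (by rw [ha, hc]),
    covBy_of_treeHt_eq_succ hT.tree hdb (by rw [hb, hc])⟩

theorem inter_subsingleton_of_samePreds (hT : IsAdmissiblePartitionTree K T I) {a b : T}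
    (hab : a ≠ b) (hht : treeHt hT.tree a = treeHt hT.tree b) (hpred : hT.SamePreds a b) :
    (I a ∩ I b).Subsingleton := by
  rcases Ordinal.zero_or_succ_or_isSuccLimit (treeHt hT.tree a) with h0 | ⟨η, hη⟩ | hlim
  · exact absurd (hT.injective (((hT.root a).1 h0).trans ((hT.root b).1 (hht ▸ h0)).symm)) hab
  · obtain ⟨c, hca, hcb⟩ := hT.exists_covBy_of_samePreds_of_succ hη.symm (hht ▸ hη.symm) hpred
    exact hT.inter_subsingleton_of_covBy hca hcb hab
  · exact absurd (hT.eq_of_samePreds_of_isSuccLimit hlim rfl hht.symm hpred) hab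

end IsAdmissiblePartitionTree

theorem stmt_12_general {K : Type} [LinearOrder K] [TopologicalSpace K]
    {T : Type} [PartialOrder T] {I : T → Set K}
    (hT : IsAdmissiblePartitionTree K T I)
    (α : Ordinal) (a b : T) (ha : treeHt hT.tree a = α) (hb : treeHt hT.tree b = α)
    (hab : a ≠ b) :
    (I a ∩ I b).Subsingleton := by
  induction α using WellFoundedLT.induction generalizing a b with
  | ind α IH =>
  by_cases hpred : hT.SamePreds a b
  · exact hT.inter_subsingleton_of_samePreds hab (ha.trans hb.symm) hpred
  · obtain ⟨c, d, hca, hdb, hcd, hne⟩ :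
        ∃ c d, c < a ∧ d < b ∧ treeHt hT.tree c = treeHt hT.tree d ∧ c ≠ d := by
      simpa [IsAdmissiblePartitionTree.SamePreds] using hpred
    exact (IH _ (ha ▸ treeHt_strictMono hT.tree hca) c d rfl hcd.symm hne).anti
      (inter_subset_inter ((hT.le_iff c a).1 hca.le) ((hT.le_iff d b).1 hdb.le))

/-- Two distinct members of the same level of an admissible partition tree meet in at most
one point. -/
theorem stmt_12 {K : Type} [LinearOrder K] [TopologicalSpace K] [OrderTopology K]
    [CompactSpace K] [Nontrivial K]
    {T : Type} [PartialOrder T] {I : T → Set K}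
    (hT : IsAdmissiblePartitionTree K T I)
    (α : Ordinal) (a b : T) (ha : treeHt hT.tree a = α) (hb : treeHt hT.tree b = α)
    (hab : a ≠ b) :
    (I a ∩ I b).Subsingleton :=
  stmt_12_general hT α a b ha hb hab
end
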